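/- arXiv:1001.0897 — 2 statements merged into one kernel-verified Lean document; each statement's English description precedes it below -/
import Mathlib

section
/- Every subring of the rational Hamilton quaternions B(ℚ) which is finitely generated as a ℤ-module is conjugate, by an element of B(ℚ)×, to a subring of the Hurwitz order B(ℤ). In particular B(ℤ) is a maximal order. -/
/-!
B(ℤ) is left Euclidean for the reduced norm: every rational quaternion lies at norm distance
`< 1` from a Hurwitz quaternion. Given `R`, the ℤ-module `I = R·B(ℤ)` is a right B(ℤ)-ideal
containing `1`, and its norms lie in `(1/N²)ℕ` because `R` has bounded denominators. Euclidean
division shows that a nonzero `q ∈ I` of minimal norm generates it, `I = q·B(ℤ)`; since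
`R·I ⊆ I`, every `r ∈ R` satisfies `r q ∈ q·B(ℤ)`, i.e. `q⁻¹ r q ∈ B(ℤ)`.
-/

/-- The Hurwitz order `ℤ[i, j, k, (1+i+j+k)/2]` inside the rational Hamilton quaternions. -/
def Hurwitz : Set (Quaternion ℚ) :=
  {x | ∃ a b c d : ℤ, (a % 2 = b % 2 ∧ b % 2 = c % 2 ∧ c % 2 = d % 2) ∧
        x = ⟨(a : ℚ) / 2, (b : ℚ) / 2, (c : ℚ) / 2, (d : ℚ) / 2⟩}

open Quaternion

namespace Quaternion

variable {R S : Type*} [CommRing R] [CommRing S]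

def mapRingHom (f : R →+* S) : ℍ[R] →+* ℍ[S] where
  toFun x := ⟨f x.re, f x.imI, f x.imJ, f x.imK⟩
  map_one' := by ext <;> simp
  map_mul' x y := by
    -- `ℍ[S]` is a `def`: the literals' product must be restated in `ℍ[S]` for `simp` to see it
    change (⟨_, _, _, _⟩ : ℍ[S]) = (⟨_, _, _, _⟩ : ℍ[S]) * (⟨_, _, _, _⟩ : ℍ[S])
    ext <;> simp <;> ring
  map_zero' := by ext <;> simp
  map_add' x y := by
    change (⟨_, _, _, _⟩ : ℍ[S]) = (⟨_, _, _, _⟩ : ℍ[S]) + (⟨_, _, _, _⟩ : ℍ[S])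
    ext <;> simp

@[simp] theorem re_mapRingHom (f : R →+* S) (x : ℍ[R]) : (mapRingHom f x).re = f x.re := rfl
@[simp] theorem imI_mapRingHom (f : R →+* S) (x : ℍ[R]) : (mapRingHom f x).imI = f x.imI := rfl
@[simp] theorem imJ_mapRingHom (f : R →+* S) (x : ℍ[R]) : (mapRingHom f x).imJ = f x.imJ := rfl
@[simp] theorem imK_mapRingHom (f : R →+* S) (x : ℍ[R]) : (mapRingHom f x).imK = f x.imK := rfl

theorem normSq_mapRingHom (f : R →+* S) (x : ℍ[R]) :
    normSq (mapRingHom f x) = f (normSq x) := by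
  simp [normSq_def']

end Quaternion

theorem Rat.exists_natCast_mul_eq_intCast_of_den_dvd {t : ℚ} {d : ℕ} (h : t.den ∣ d) :
    ∃ a : ℤ, (d : ℚ) * t = a := by
  obtain ⟨k, rfl⟩ := h
  refine ⟨k * t.num, ?_⟩
  rw [Nat.cast_mul, mul_right_comm, Rat.den_mul_eq_num]
  push_cast
  ring

theorem AddSubmonoid.exists_forall_nsmul_mem {M ι : Type*} [AddCommMonoid M] [Fintype ι]
    (P : AddSubmonoid M) {g : ι → M} (h : ∀ i, ∃ m : ℕ, 0 < m ∧ m • g i ∈ P) :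
    ∃ m : ℕ, 0 < m ∧ ∀ i, m • g i ∈ P := by
  choose m hm hmP using h
  refine ⟨∏ i, m i, Finset.prod_pos fun i _ => hm i, fun i => ?_⟩
  obtain ⟨k, hk⟩ := Finset.dvd_prod_of_mem m (Finset.mem_univ i)
  rw [hk, mul_nsmul]
  exact P.nsmul_mem (hmP i) k

section Round

variable {α : Type*} [Field α] [LinearOrder α] [IsStrictOrderedRing α] [FloorRing α]

theorem sq_sub_round_le (t : α) : (t - round t) ^ 2 ≤ 1 / 4 :=
  calc (t - round t) ^ 2 = |t - round t| ^ 2 := (sq_abs _).symm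
    _ ≤ (1 / 2) ^ 2 := pow_le_pow_left₀ (abs_nonneg _) (abs_sub_round t) 2
    _ = 1 / 4 := by norm_num

theorem exists_odd_eq_half_of_sq_sub_round_eq {t : α} (h : (t - round t) ^ 2 = 1 / 4) :
    ∃ a : ℤ, a % 2 = 1 ∧ t = a / 2 := by
  have h0 : (t - round t - 1 / 2) * (t - round t + 1 / 2) = 0 := by linear_combination h
  rcases mul_eq_zero.mp h0 with h1 | h1
  · exact ⟨2 * round t + 1, by omega, by push_cast; linarith⟩
  · exact ⟨2 * round t - 1, by omega, by push_cast; linarith⟩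

end Round

namespace Subring

variable {A : Type*} [Ring A] (R S : Subring A)

def mulSubmodule : Submodule ℤ A :=
  R.toAddSubgroup.toIntSubmodule * S.toAddSubgroup.toIntSubmodule

variable {R S}

theorem mul_mem_mulSubmodule {r s : A} (hr : r ∈ R) (hs : s ∈ S) : r * s ∈ R.mulSubmodule S :=
  Submodule.mul_mem_mul hr hs

theorem mul_mem_mulSubmodule_left {r x : A} (hr : r ∈ R) (hx : x ∈ R.mulSubmodule S) :
    r * x ∈ R.mulSubmodule S :=
  Submodule.mul_induction_on hx
    (fun r' hr' s hs => mul_assoc r r' s ▸ mul_mem_mulSubmodule (R.mul_mem hr hr') hs)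
    (fun y z hy hz => (mul_add r y z).symm ▸ add_mem hy hz)

theorem mul_mem_mulSubmodule_right {x s : A} (hx : x ∈ R.mulSubmodule S) (hs : s ∈ S) :
    x * s ∈ R.mulSubmodule S :=
  Submodule.mul_induction_on hx
    (fun r hr s' hs' => (mul_assoc r s' s).symm ▸ mul_mem_mulSubmodule hr (S.mul_mem hs' hs))
    (fun y z hy hz => (add_mul y z s).symm ▸ add_mem hy hz)

end Subring

def intQuaternions : Subring ℍ[ℚ] := (mapRingHom (Int.castRingHom ℚ)).range

theorem exists_normSq_eq_natCast_of_mem_intQuaternions {x : ℍ[ℚ]} (hx : x ∈ intQuaternions) :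
    ∃ k : ℕ, normSq x = k := by
  obtain ⟨y, rfl⟩ := hx
  refine ⟨(normSq y).toNat, ?_⟩
  rw [normSq_mapRingHom, ← Int.cast_natCast, Int.toNat_of_nonneg normSq_nonneg]
  rfl

theorem exists_nsmul_mem_intQuaternions (x : ℍ[ℚ]) :
    ∃ m : ℕ, 0 < m ∧ m • x ∈ intQuaternions := by
  set m := x.re.den * x.imI.den * x.imJ.den * x.imK.den
  obtain ⟨a, ha⟩ := Rat.exists_natCast_mul_eq_intCast_of_den_dvd (t := x.re) (d := m)
    (dvd_mul_of_dvd_left (dvd_mul_of_dvd_left (dvd_mul_right _ _) _) _)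
  obtain ⟨b, hb⟩ := Rat.exists_natCast_mul_eq_intCast_of_den_dvd (t := x.imI) (d := m)
    (dvd_mul_of_dvd_left (dvd_mul_of_dvd_left (dvd_mul_left _ _) _) _)
  obtain ⟨c, hc⟩ := Rat.exists_natCast_mul_eq_intCast_of_den_dvd (t := x.imJ) (d := m)
    (dvd_mul_of_dvd_left (dvd_mul_left _ _) _)
  obtain ⟨d, hd⟩ := Rat.exists_natCast_mul_eq_intCast_of_den_dvd (t := x.imK) (d := m)
    (dvd_mul_left _ _)
  refine ⟨m, by positivity, (equivProd ℤ).symm (a, b, c, d), ?_⟩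
  ext <;> simp [← ha, ← hb, ← hc, ← hd, nsmul_eq_mul]

theorem mem_hurwitz_iff {x : ℍ[ℚ]} :
    x ∈ Hurwitz ↔ ∃ a b c d : ℤ, (a % 2 = b % 2 ∧ b % 2 = c % 2 ∧ c % 2 = d % 2) ∧
      x.re = a / 2 ∧ x.imI = b / 2 ∧ x.imJ = c / 2 ∧ x.imK = d / 2 := by
  constructor
  · rintro ⟨a, b, c, d, h, rfl⟩
    exact ⟨a, b, c, d, h, rfl, rfl, rfl, rfl⟩
  · rintro ⟨a, b, c, d, h, h1, h2, h3, h4⟩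
    exact ⟨a, b, c, d, h, by ext <;> assumption⟩

theorem mul_mem_hurwitz {x y : ℍ[ℚ]} (hx : x ∈ Hurwitz) (hy : y ∈ Hurwitz) :
    x * y ∈ Hurwitz := by
  obtain ⟨a, b, c, d, ⟨p1, p2, p3⟩, hx⟩ := mem_hurwitz_iff.mp hx
  obtain ⟨a', b', c', d', ⟨q1, q2, q3⟩, hy⟩ := mem_hurwitz_iff.mp hy
  obtain ⟨u, rfl⟩ : ∃ u, b = a + 2 * u := ⟨(b - a) / 2, by omega⟩
  obtain ⟨v, rfl⟩ : ∃ v, c = a + 2 * v := ⟨(c - a) / 2, by omega⟩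
  obtain ⟨w, rfl⟩ : ∃ w, d = a + 2 * w := ⟨(d - a) / 2, by omega⟩
  obtain ⟨u', rfl⟩ : ∃ u', b' = a' + 2 * u' := ⟨(b' - a') / 2, by omega⟩
  obtain ⟨v', rfl⟩ : ∃ v', c' = a' + 2 * v' := ⟨(c' - a') / 2, by omega⟩
  obtain ⟨w', rfl⟩ : ∃ w', d' = a' + 2 * w' := ⟨(d' - a') / 2, by omega⟩
  -- the doubled coordinates of `x * y`
  refine mem_hurwitz_iff.mpr
    ⟨-(a * a') - a * (u' + v' + w') - a' * (u + v + w) - 2 * (u * u' + v * v' + w * w'),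
    a * a' + a * (u' - v' + w') + a' * (u + v - w) + 2 * (v * w' - w * v'),
    a * a' + a * (u' + v' - w') + a' * (-u + v + w) + 2 * (w * u' - u * w'),
    a * a' + a * (-u' + v' + w') + a' * (u - v + w) + 2 * (u * v' - v * u'), ⟨?_, ?_, ?_⟩, ?_⟩
  · exact Int.modEq_iff_dvd.mpr ⟨a * a' + a * (u' + w') + a' * (u + v)
      + (v * w' - w * v' + u * u' + v * v' + w * w'), by ring⟩
  · exact Int.modEq_iff_dvd.mpr
      ⟨a * (v' - w') + a' * (w - u) + (w * u' - u * w' - v * w' + w * v'), by ring⟩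
  · exact Int.modEq_iff_dvd.mpr
      ⟨a * (w' - u') + a' * (u - v) + (u * v' - v * u' - w * u' + u * w'), by ring⟩
  · simp only [re_mul, imI_mul, imJ_mul, imK_mul, hx, hy]
    push_cast
    exact ⟨by ring, by ring, by ring, by ring⟩

def hurwitzOrder : Subring ℍ[ℚ] where
  carrier := Hurwitz
  zero_mem' := mem_hurwitz_iff.mpr ⟨0, 0, 0, 0, by decide, by simp⟩
  one_mem' := mem_hurwitz_iff.mpr ⟨2, 0, 0, 0, by decide, by simp⟩
  add_mem' {x y} hx hy := by
    obtain ⟨a, b, c, d, h, hx⟩ := mem_hurwitz_iff.mp hx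
    obtain ⟨a', b', c', d', h', hy⟩ := mem_hurwitz_iff.mp hy
    refine mem_hurwitz_iff.mpr ⟨a + a', b + b', c + c', d + d', by omega, ?_⟩
    simp only [re_add, imI_add, imJ_add, imK_add, hx, hy]
    push_cast
    exact ⟨by ring, by ring, by ring, by ring⟩
  neg_mem' {x} hx := by
    obtain ⟨a, b, c, d, h, hx⟩ := mem_hurwitz_iff.mp hx
    refine mem_hurwitz_iff.mpr ⟨-a, -b, -c, -d, by omega, ?_⟩
    simp only [re_neg, imI_neg, imJ_neg, imK_neg, hx]
    push_cast
    exact ⟨by ring, by ring, by ring, by ring⟩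
  mul_mem' := mul_mem_hurwitz

theorem two_nsmul_mem_intQuaternions {x : ℍ[ℚ]} (hx : x ∈ Hurwitz) :
    2 • x ∈ intQuaternions := by
  obtain ⟨a, b, c, d, -, h1, h2, h3, h4⟩ := mem_hurwitz_iff.mp hx
  refine ⟨(equivProd ℤ).symm (a, b, c, d), ?_⟩
  rw [two_nsmul]
  ext <;> simp [h1, h2, h3, h4]

theorem exists_mem_hurwitz_normSq_sub_lt_one (z : ℍ[ℚ]) :
    ∃ h ∈ Hurwitz, normSq (z - h) < 1 := by
  set w := (equivProd ℚ).symm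
    ((round z.re : ℚ), (round z.imI : ℚ), (round z.imJ : ℚ), (round z.imK : ℚ))
  have hw : w ∈ Hurwitz := mem_hurwitz_iff.mpr
    ⟨2 * round z.re, 2 * round z.imI, 2 * round z.imJ, 2 * round z.imK, by omega, by simp [w]⟩
  have hval : normSq (z - w) = (z.re - round z.re) ^ 2 + (z.imI - round z.imI) ^ 2
      + (z.imJ - round z.imJ) ^ 2 + (z.imK - round z.imK) ^ 2 := by
    simp [w, normSq_def']
  rcases lt_or_ge (normSq (z - w)) 1 with hlt | hge
  · exact ⟨w, hw, hlt⟩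
  -- otherwise each coordinate of `z` is half an odd integer, so `z` itself is Hurwitz
  have := sq_sub_round_le z.re
  have := sq_sub_round_le z.imI
  have := sq_sub_round_le z.imJ
  have := sq_sub_round_le z.imK
  obtain ⟨a, ha, h1⟩ := exists_odd_eq_half_of_sq_sub_round_eq (t := z.re) (by linarith)
  obtain ⟨b, hb, h2⟩ := exists_odd_eq_half_of_sq_sub_round_eq (t := z.imI) (by linarith)
  obtain ⟨c, hc, h3⟩ := exists_odd_eq_half_of_sq_sub_round_eq (t := z.imJ) (by linarith)
  obtain ⟨d, hd, h4⟩ := exists_odd_eq_half_of_sq_sub_round_eq (t := z.imK) (by linarith)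
  exact ⟨z, mem_hurwitz_iff.mpr ⟨a, b, c, d, by omega, h1, h2, h3, h4⟩, by simp⟩

theorem exists_ne_zero_forall_normSq_le {S : Set ℍ[ℚ]} {N : ℕ} (hN : 0 < N)
    (hS : ∀ x ∈ S, N • x ∈ intQuaternions) {x₀ : ℍ[ℚ]} (hx₀ : x₀ ∈ S) (hx₀0 : x₀ ≠ 0) :
    ∃ q ∈ S, q ≠ 0 ∧ ∀ x ∈ S, x ≠ 0 → normSq q ≤ normSq x := by
  classical
  have hnat (x : ℍ[ℚ]) (hx : x ∈ S) : ∃ k : ℕ, normSq (N • x) = k :=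
    exists_normSq_eq_natCast_of_mem_intQuaternions (hS x hx)
  have hex : ∃ k : ℕ, ∃ x ∈ S, x ≠ 0 ∧ normSq (N • x) = k :=
    (hnat x₀ hx₀).imp fun _ hk => ⟨x₀, hx₀, hx₀0, hk⟩
  obtain ⟨q, hq, hq0, hqk⟩ := Nat.find_spec hex
  refine ⟨q, hq, hq0, fun x hx hx0 => ?_⟩
  obtain ⟨k, hxk⟩ := hnat x hx
  have hle : normSq (N • q) ≤ normSq (N • x) := by
    rw [hqk, hxk]
    exact_mod_cast Nat.find_min' hex ⟨x, hx, hx0, hxk⟩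
  simp only [← Nat.cast_smul_eq_nsmul ℚ, normSq_smul] at hle
  exact le_of_mul_le_mul_left hle (by positivity)

theorem inv_mul_mem_hurwitz_of_forall_normSq_le {I : AddSubgroup ℍ[ℚ]}
    (hI : ∀ x ∈ I, ∀ h ∈ Hurwitz, x * h ∈ I) {q : ℍ[ℚ]} (hq : q ∈ I) (hq0 : q ≠ 0)
    (hmin : ∀ x ∈ I, x ≠ 0 → normSq q ≤ normSq x) {x : ℍ[ℚ]} (hx : x ∈ I) :
    q⁻¹ * x ∈ Hurwitz := by
  obtain ⟨h, hh, hlt⟩ := exists_mem_hurwitz_normSq_sub_lt_one (q⁻¹ * x)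
  have hq_pos : 0 < normSq q := normSq_nonneg.lt_of_ne' (normSq_ne_zero.mpr hq0)
  have hrem : normSq (x - q * h) < normSq q :=
    calc normSq (x - q * h) = normSq q * normSq (q⁻¹ * x - h) := by
          rw [← map_mul, mul_sub, mul_inv_cancel_left₀ hq0]
      _ < normSq q * 1 := mul_lt_mul_of_pos_left hlt hq_pos
      _ = normSq q := mul_one _
  have hxq : x = q * h := by
    by_contra hne
    exact (hmin _ (sub_mem hx (hI q hq h hh)) (sub_ne_zero.mpr hne)).not_gt hrem
  rwa [hxq, inv_mul_cancel_left₀ hq0]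

theorem nsmul_mem_intQuaternions_of_mem_mulSubmodule_hurwitzOrder {R : Subring ℍ[ℚ]} {m : ℕ}
    (hR : ∀ r ∈ R, m • r ∈ intQuaternions) {x : ℍ[ℚ]}
    (hx : x ∈ R.mulSubmodule hurwitzOrder) : (m * 2) • x ∈ intQuaternions :=
  Submodule.mul_induction_on hx
    (fun r hr h hh => smul_mul_smul_comm m r 2 h ▸
      intQuaternions.mul_mem (hR r hr) (two_nsmul_mem_intQuaternions hh))
    (fun y z hy hz => (smul_add (m * 2) y z).symm ▸ add_mem hy hz)

/-- Every subring of the rational Hamilton quaternions which is finitely generated as a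
`ℤ`-module is conjugate, by an element of `B(ℚ)ˣ`, to a subring of the Hurwitz order. -/
theorem fg_subring_conjugate_into_hurwitz (R : Subring (Quaternion ℚ))
    (hfg : ∃ n : ℕ, ∃ g : Fin n → Quaternion ℚ,
        ∀ x ∈ R, ∃ c : Fin n → ℤ, x = ∑ i, (c i : ℚ) • g i) :
    ∃ q : Quaternion ℚ, q ≠ 0 ∧ ∀ r ∈ R, q⁻¹ * r * q ∈ Hurwitz := by
  obtain ⟨n, g, hg⟩ := hfg
  obtain ⟨m, hm, hmg⟩ := intQuaternions.toAddSubmonoid.exists_forall_nsmul_mem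
    fun i => exists_nsmul_mem_intQuaternions (g i)
  have hmR : ∀ r ∈ R, m • r ∈ intQuaternions := by
    intro r hr
    obtain ⟨c, rfl⟩ := hg r hr
    simp only [Int.cast_smul_eq_zsmul, Finset.smul_sum, smul_comm m]
    exact sum_mem fun i _ => intQuaternions.zsmul_mem (hmg i) _
  set I := R.mulSubmodule hurwitzOrder
  have hone : (1 : ℍ[ℚ]) ∈ I := by
    simpa using Subring.mul_mem_mulSubmodule R.one_mem hurwitzOrder.one_mem
  obtain ⟨q, hqI, hq0, hmin⟩ := exists_ne_zero_forall_normSq_le (S := I) (by positivity)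
    (fun x hx => nsmul_mem_intQuaternions_of_mem_mulSubmodule_hurwitzOrder hmR hx)
    hone one_ne_zero
  refine ⟨q, hq0, fun r hr => ?_⟩
  rw [mul_assoc]
  exact inv_mul_mem_hurwitz_of_forall_normSq_le (I := I.toAddSubgroup)
    (fun x hx h hh => Subring.mul_mem_mulSubmodule_right hx hh) hqI hq0 hmin
    (Subring.mul_mem_mulSubmodule_left hr hqI)
end

section
/- Let p be an odd prime and d ∈ ℤ_p squarefree with p | d. Then the conjugation action of SL₂(ℤ_p) on the set of trace-zero matrices in M₂(ℤ_p) of determinant d has exactly two orbits, and these two orbits are interchanged by conjugation by some element of GL₂(ℤ_p); in particular GL₂(ℤ_p) acts transitively on this set. -/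
/-!
Conjugating by `SL₂` one may move a unit into the upper right corner (one of the two
off-diagonal entries is a unit, since otherwise `p² ∣ d`) and then clear the diagonal, so every
`x` is `SL₂`-conjugate to some `!![0, u; -d/u, 0]` with `u` a unit. Conjugating by
`diag(t, t⁻¹)` multiplies `u` by `t²`, and by Hensel's lemma the units of `ℤ_p` form exactly two
square classes, those of `1` and of a non-residue `ε`; this gives at most two orbits.
Conversely, if `!![0, u; -d/u, 0]` and `!![0, v; -d/v, 0]` are `SL₂`-conjugate, then `uv` is a
square modulo `d`, hence modulo `p`, so the two classes are distinct. Finally `diag(ε, 1)` in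
`GL₂` multiplies `u` by `ε`, which swaps them.
-/

open Matrix

open Polynomial in
theorem HenselianRing.isSquare_of_mul_self_sub_mem {R : Type*} [CommRing R] {I : Ideal R}
    [HenselianRing R I] {a t : R} (hat : t * t - a ∈ I) (ht : IsUnit (2 * t)) :
    IsSquare a := by
  obtain ⟨s, hs, -⟩ := HenselianRing.is_henselian (X ^ 2 - C a) (monic_X_pow_sub_C a two_ne_zero)
    t (by simpa [sq] using hat) (by convert ht.map (Ideal.Quotient.mk I) using 2; simp; ring)
  exact ⟨s, by simpa [sq, sub_eq_zero, eq_comm] using hs⟩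

theorem FiniteField.isSquare_mul_of_not_isSquare {F : Type*} [Field F] [Fintype F]
    [DecidableEq F] {a b : F} (ha : ¬IsSquare a) (hb : ¬IsSquare b) : IsSquare (a * b) := by
  have ha0 : a ≠ 0 := by rintro rfl; exact ha IsSquare.zero
  have hb0 : b ≠ 0 := by rintro rfl; exact hb IsSquare.zero
  rw [← quadraticChar_neg_one_iff_not_isSquare] at ha hb
  rw [← quadraticChar_one_iff_isSquare (mul_ne_zero ha0 hb0), map_mul, ha, hb]
  norm_num

namespace Matrix

section Conj

variable {n R : Type*} [Fintype n] [DecidableEq n] [CommRing R]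

def IsSLConj (x y : Matrix n n R) : Prop :=
  ∃ g : Matrix n n R, g.det = 1 ∧ y = g * x * g⁻¹

def IsGLConj (x y : Matrix n n R) : Prop :=
  ∃ g : Matrix n n R, IsUnit g.det ∧ y = g * x * g⁻¹

theorem eq_mul_mul_nonsing_inv_iff_mul_eq {g x y : Matrix n n R} (hg : IsUnit g.det) :
    y = g * x * g⁻¹ ↔ y * g = g * x := by
  constructor
  · rintro rfl
    rw [mul_assoc, mul_assoc, nonsing_inv_mul g hg, mul_one]
  · intro h
    rw [← h, mul_assoc, mul_nonsing_inv g hg, mul_one]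

theorem isSLConj_iff_exists_mul_eq {x y : Matrix n n R} :
    IsSLConj x y ↔ ∃ g : Matrix n n R, g.det = 1 ∧ y * g = g * x := by
  refine exists_congr fun g ↦ and_congr_right fun hg ↦ ?_
  exact eq_mul_mul_nonsing_inv_iff_mul_eq (hg ▸ isUnit_one)

namespace IsSLConj

theorem of_mul_eq {g x y : Matrix n n R} (hg : g.det = 1) (h : y * g = g * x) : IsSLConj x y :=
  isSLConj_iff_exists_mul_eq.mpr ⟨g, hg, h⟩

theorem refl (x : Matrix n n R) : IsSLConj x x :=
  of_mul_eq det_one (by simp)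

theorem symm {x y : Matrix n n R} : IsSLConj x y → IsSLConj y x := by
  rintro ⟨g, hg, rfl⟩
  have hu : IsUnit g.det := hg ▸ isUnit_one
  refine of_mul_eq (g := g⁻¹) (by simp [hg]) ?_
  simp [← mul_assoc, nonsing_inv_mul g hu]

theorem trans {x y z : Matrix n n R} : IsSLConj x y → IsSLConj y z → IsSLConj x z := by
  rintro ⟨g, hg, rfl⟩ ⟨g', hg', rfl⟩
  exact ⟨g' * g, by simp [hg, hg'], by simp [mul_inv_rev, mul_assoc]⟩

theorem isGLConj {x y : Matrix n n R} : IsSLConj x y → IsGLConj x y := by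
  rintro ⟨g, hg, rfl⟩
  exact ⟨g, hg ▸ isUnit_one, rfl⟩

theorem trace_eq {x y : Matrix n n R} : IsSLConj x y → y.trace = x.trace := by
  rintro ⟨g, hg, rfl⟩
  exact trace_conj ((isUnit_iff_isUnit_det g).mpr (hg ▸ isUnit_one)) x

theorem det_eq {x y : Matrix n n R} : IsSLConj x y → y.det = x.det := by
  rintro ⟨g, hg, rfl⟩
  exact det_conj ((isUnit_iff_isUnit_det g).mpr (hg ▸ isUnit_one)) x

end IsSLConj

theorem IsGLConj.symm {x y : Matrix n n R} : IsGLConj x y → IsGLConj y x := by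
  rintro ⟨g, hg, rfl⟩
  have hg' : IsUnit g⁻¹.det := by simpa using hg.ringInverse
  refine ⟨g⁻¹, hg', (eq_mul_mul_nonsing_inv_iff_mul_eq hg').mpr ?_⟩
  simp [← mul_assoc, nonsing_inv_mul g hg]

theorem IsGLConj.trans {x y z : Matrix n n R} :
    IsGLConj x y → IsGLConj y z → IsGLConj x z := by
  rintro ⟨g, hg, rfl⟩ ⟨g', hg', rfl⟩
  exact ⟨g' * g, by simpa using hg'.mul hg, by simp [mul_inv_rev, mul_assoc]⟩

end Conj

section Antidiag

variable {R : Type*} [CommRing R]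

def antidiag (d : R) (u : Rˣ) : Matrix (Fin 2) (Fin 2) R :=
  !![0, u; -(d * ↑u⁻¹), 0]

@[simp]
theorem trace_antidiag (d : R) (u : Rˣ) : (antidiag d u).trace = 0 := by
  simp [antidiag, trace_fin_two]

@[simp]
theorem det_antidiag (d : R) (u : Rˣ) : (antidiag d u).det = d := by
  have := u.mul_inv
  simp [antidiag, det_fin_two]
  grind

theorem isSLConj_antidiag_mul_self_mul (d : R) (u t : Rˣ) :
    IsSLConj (antidiag d u) (antidiag d (t * t * u)) := by
  refine IsSLConj.of_mul_eq (g := !![(t : R), 0; 0, ↑t⁻¹]) (by simp [det_fin_two]) ?_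
  have := t.mul_inv
  ext i j
  fin_cases i <;> fin_cases j <;> simp [antidiag] <;> grind

theorem diag_mul_antidiag_mul_inv (d : R) (u v : Rˣ) :
    !![(v : R), 0; 0, 1] * antidiag d u * !![(v : R), 0; 0, 1]⁻¹ = antidiag d (v * u) := by
  refine ((eq_mul_mul_nonsing_inv_iff_mul_eq (by simp [det_fin_two])).mpr ?_).symm
  ext i j
  fin_cases i <;> fin_cases j <;> simp [antidiag, mul_assoc]

theorem isSLConj_swap (x : Matrix (Fin 2) (Fin 2) R) :
    IsSLConj x !![x 1 1, -x 1 0; -x 0 1, x 0 0] := by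
  refine IsSLConj.of_mul_eq (g := !![0, 1; -1, 0]) (by simp [det_fin_two]) ?_
  ext i j
  fin_cases i <;> fin_cases j <;> simp [mul_apply, Fin.sum_univ_two]

theorem isSLConj_antidiag_of_trace_eq_zero {x : Matrix (Fin 2) (Fin 2) R} (hx : x.trace = 0)
    {u : Rˣ} (hu : x 0 1 = u) : IsSLConj (antidiag x.det u) x := by
  refine IsSLConj.of_mul_eq (g := !![1, 0; -(x 0 0 * ↑u⁻¹), 1]) (by simp [det_fin_two]) ?_
  have := u.mul_inv
  rw [trace_fin_two] at hx
  ext i j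
  fin_cases i <;> fin_cases j <;>
    simp [antidiag, det_fin_two, mul_apply, Fin.sum_univ_two] <;> grind

theorem IsSLConj.exists_mul_eq_mul_self_add_mul {d : R} {u v : Rˣ}
    (h : IsSLConj (antidiag d u) (antidiag d v)) :
    ∃ s t : R, ↑u * ↑v = s * s + d * (t * t) := by
  obtain ⟨g, hg, e⟩ := isSLConj_iff_exists_mul_eq.mp h
  -- multiply `det g = 1` by `u v` and use the `(0, 1)` and `(1, 1)` entries of `x_v g = g x_u`
  refine ⟨v * g 1 1, g 0 1, ?_⟩
  have h01 := congr_fun₂ e 0 1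
  have h11 := congr_fun₂ e 1 1
  have := u.mul_inv
  have := v.mul_inv
  rw [det_fin_two] at hg
  simp [antidiag, mul_apply, Fin.sum_univ_two] at h01 h11
  grind

end Antidiag

end Matrix

namespace PadicInt

variable {p : ℕ} [Fact p.Prime]

theorem isUnit_iff_toZMod_ne_zero {x : ℤ_[p]} : IsUnit x ↔ toZMod x ≠ 0 := by
  rw [ne_eq, ← RingHom.mem_ker, ker_toZMod, IsLocalRing.mem_maximalIdeal, mem_nonunits_iff,
    not_not]

theorem not_isUnit_iff_dvd {x : ℤ_[p]} : ¬IsUnit x ↔ (p : ℤ_[p]) ∣ x := by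
  rw [not_isUnit_iff, norm_lt_one_iff_dvd]

theorem isSquare_of_isSquare_toZMod (hp : p ≠ 2) {a : ℤ_[p]ˣ}
    (ha : IsSquare (toZMod (a : ℤ_[p]))) : IsSquare a := by
  obtain ⟨r, hr⟩ := ha
  obtain ⟨t, rfl⟩ := ZMod.ringHom_surjective toZMod r
  have h2t : toZMod (2 * t) ≠ 0 := by
    have ht : toZMod t ≠ 0 := fun ht ↦ isUnit_iff_toZMod_ne_zero.mp a.isUnit (by simp [hr, ht])
    rw [map_mul, map_ofNat]
    exact mul_ne_zero (Ring.two_ne_zero (by rwa [ZMod.ringChar_zmod_n])) ht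
  obtain ⟨s, hs⟩ := HenselianRing.isSquare_of_mul_self_sub_mem
    (I := IsLocalRing.maximalIdeal ℤ_[p]) (a := (a : ℤ_[p]))
    (by rw [← ker_toZMod, RingHom.mem_ker, map_sub, map_mul, hr, sub_self])
    (isUnit_iff_toZMod_ne_zero.mpr h2t)
  have hsu : IsUnit s := isUnit_of_mul_isUnit_left (hs ▸ a.isUnit)
  exact ⟨hsu.unit, Units.ext hs⟩

theorem exists_unit_not_isSquare_toZMod (hp : p ≠ 2) :
    ∃ ε : ℤ_[p]ˣ, ¬IsSquare (toZMod (ε : ℤ_[p])) := by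
  obtain ⟨r, hr⟩ := FiniteField.exists_nonsquare (F := ZMod p) (by rwa [ZMod.ringChar_zmod_n])
  obtain ⟨e, rfl⟩ := ZMod.ringHom_surjective toZMod r
  have he : IsUnit e := isUnit_iff_toZMod_ne_zero.mpr (by rintro h; exact hr (h ▸ IsSquare.zero))
  exact ⟨he.unit, hr⟩

theorem exists_eq_mul_self_or_eq_mul_self_mul (hp : p ≠ 2) {ε : ℤ_[p]ˣ}
    (hε : ¬IsSquare (toZMod (ε : ℤ_[p]))) (a : ℤ_[p]ˣ) :
    (∃ t : ℤ_[p]ˣ, a = t * t) ∨ ∃ t : ℤ_[p]ˣ, a = t * t * ε := by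
  by_cases ha : IsSquare (toZMod (a : ℤ_[p]))
  · exact Or.inl (isSquare_of_isSquare_toZMod hp ha)
  · obtain ⟨s, hs⟩ : IsSquare (a * ε) := isSquare_of_isSquare_toZMod hp (by
      rw [Units.val_mul, map_mul]
      exact FiniteField.isSquare_mul_of_not_isSquare ha hε)
    refine Or.inr ⟨s * ε⁻¹, ?_⟩
    rw [eq_mul_inv_of_mul_eq hs]
    simp [mul_assoc, mul_left_comm]

theorem isUnit_apply_zero_one_or_apply_one_zero {d : ℤ_[p]} (hsq : Squarefree d)
    (hd : (p : ℤ_[p]) ∣ d) {x : Matrix (Fin 2) (Fin 2) ℤ_[p]} (hx : x.trace = 0)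
    (hdet : x.det = d) : IsUnit (x 0 1) ∨ IsUnit (x 1 0) := by
  by_contra! h
  obtain ⟨ha, hc⟩ := h
  rw [not_isUnit_iff_dvd] at ha hc
  have hx11 : x 1 1 = -x 0 0 := by rw [trace_fin_two] at hx; linear_combination hx
  rw [det_fin_two, hx11] at hdet
  have hb : (p : ℤ_[p]) ∣ x 0 0 := by
    refine prime_p.dvd_of_dvd_pow (n := 2) ?_
    rw [sq, show x 0 0 * x 0 0 = -d - x 0 1 * x 1 0 by linear_combination -hdet]
    exact dvd_sub hd.neg_right (dvd_mul_of_dvd_left ha _)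
  have hp2 : (p : ℤ_[p]) * p ∣ d := by
    rw [show d = -(x 0 0 * x 0 0) - x 0 1 * x 1 0 by linear_combination -hdet]
    exact dvd_sub (mul_dvd_mul hb hb).neg_right (mul_dvd_mul ha hc)
  exact prime_p.not_isUnit (hsq _ hp2)

theorem isSLConj_antidiag_one_or_antidiag (hp : p ≠ 2) {d : ℤ_[p]} (hsq : Squarefree d)
    (hd : (p : ℤ_[p]) ∣ d) {ε : ℤ_[p]ˣ} (hε : ¬IsSquare (toZMod (ε : ℤ_[p])))
    {x : Matrix (Fin 2) (Fin 2) ℤ_[p]} (hx : x.trace = 0) (hdet : x.det = d) :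
    IsSLConj (antidiag d 1) x ∨ IsSLConj (antidiag d ε) x := by
  obtain ⟨y, hyx, hy⟩ : ∃ y, IsSLConj y x ∧ IsUnit (y 0 1) := by
    rcases isUnit_apply_zero_one_or_apply_one_zero hsq hd hx hdet with h | h
    · exact ⟨x, .refl x, h⟩
    · exact ⟨_, (isSLConj_swap x).symm, by simpa using h.neg⟩
  have hya := isSLConj_antidiag_of_trace_eq_zero (hyx.trace_eq ▸ hx) hy.unit_spec.symm
  rw [← hyx.det_eq, hdet] at hya
  rcases exists_eq_mul_self_or_eq_mul_self_mul hp hε hy.unit with ⟨t, ht⟩ | ⟨t, ht⟩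
  · left
    rw [ht, ← mul_one (t * t)] at hya
    exact (isSLConj_antidiag_mul_self_mul d 1 t).trans (hya.trans hyx)
  · right
    rw [ht] at hya
    exact (isSLConj_antidiag_mul_self_mul d ε t).trans (hya.trans hyx)

theorem not_isSLConj_antidiag_one {d : ℤ_[p]} (hd : (p : ℤ_[p]) ∣ d) {ε : ℤ_[p]ˣ}
    (hε : ¬IsSquare (toZMod (ε : ℤ_[p]))) : ¬IsSLConj (antidiag d 1) (antidiag d ε) := by
  intro h
  obtain ⟨s, t, hst⟩ := h.exists_mul_eq_mul_self_add_mul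
  have hd0 : toZMod d = 0 := by obtain ⟨k, rfl⟩ := hd; simp
  exact hε ⟨toZMod s, by simpa [hd0] using congrArg toZMod hst⟩

end PadicInt

open PadicInt in
/-- For an odd prime `p` and squarefree `d ∈ ℤ_p` with `p ∣ d`, the conjugation action of
`SL₂(ℤ_p)` on the set `S` of trace-zero matrices of determinant `d` in `M₂(ℤ_p)` has
exactly two orbits, which are interchanged by conjugation by some element of `GL₂(ℤ_p)`;
in particular `GL₂(ℤ_p)` acts transitively on `S`. -/
theorem sl2_two_orbits_ramified (p : ℕ) [Fact p.Prime] (hp : p ≠ 2)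
    (d : ℤ_[p]) (hsq : Squarefree d) (hd : (p : ℤ_[p]) ∣ d) :
    ∃ x₀ x₁ : Matrix (Fin 2) (Fin 2) ℤ_[p],
      (x₀.trace = 0 ∧ x₀.det = d) ∧ (x₁.trace = 0 ∧ x₁.det = d) ∧
      ¬ (∃ g : Matrix (Fin 2) (Fin 2) ℤ_[p], g.det = 1 ∧ x₁ = g * x₀ * g⁻¹) ∧
      (∀ y : Matrix (Fin 2) (Fin 2) ℤ_[p], y.trace = 0 → y.det = d →
        (∃ g : Matrix (Fin 2) (Fin 2) ℤ_[p], g.det = 1 ∧ y = g * x₀ * g⁻¹) ∨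
        (∃ g : Matrix (Fin 2) (Fin 2) ℤ_[p], g.det = 1 ∧ y = g * x₁ * g⁻¹)) ∧
      (∃ h : Matrix (Fin 2) (Fin 2) ℤ_[p], IsUnit h.det ∧
        (∃ g : Matrix (Fin 2) (Fin 2) ℤ_[p], g.det = 1 ∧ x₁ = g * (h * x₀ * h⁻¹) * g⁻¹) ∧
        (∃ g : Matrix (Fin 2) (Fin 2) ℤ_[p], g.det = 1 ∧ x₀ = g * (h * x₁ * h⁻¹) * g⁻¹)) ∧
      (∀ x y : Matrix (Fin 2) (Fin 2) ℤ_[p], x.trace = 0 → x.det = d →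
        y.trace = 0 → y.det = d →
        ∃ h : Matrix (Fin 2) (Fin 2) ℤ_[p], IsUnit h.det ∧ y = h * x * h⁻¹) := by
  obtain ⟨ε, hε⟩ := exists_unit_not_isSquare_toZMod hp
  set h : Matrix (Fin 2) (Fin 2) ℤ_[p] := !![(ε : ℤ_[p]), 0; 0, 1]
  have hh : IsUnit h.det := by simp [h, det_fin_two]
  have hswap : h * antidiag d 1 * h⁻¹ = antidiag d ε := by
    rw [diag_mul_antidiag_mul_inv, mul_one]
  have horbit (y : Matrix (Fin 2) (Fin 2) ℤ_[p]) (hy : y.trace = 0) (hyd : y.det = d) :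
      IsSLConj (antidiag d 1) y ∨ IsSLConj (antidiag d ε) y :=
    isSLConj_antidiag_one_or_antidiag hp hsq hd hε hy hyd
  have hGL (y : Matrix (Fin 2) (Fin 2) ℤ_[p]) (hy : y.trace = 0) (hyd : y.det = d) :
      IsGLConj (antidiag d 1) y := by
    rcases horbit y hy hyd with h₀ | h₁
    · exact h₀.isGLConj
    · exact IsGLConj.trans ⟨h, hh, hswap.symm⟩ h₁.isGLConj
  refine ⟨antidiag d 1, antidiag d ε, by simp, by simp, not_isSLConj_antidiag_one hd hε, horbit,
    ⟨h, hh, ?_, ?_⟩, fun x y hx hxd hy hyd ↦ (hGL x hx hxd).symm.trans (hGL y hy hyd)⟩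
  · exact hswap ▸ IsSLConj.refl _
  · rw [diag_mul_antidiag_mul_inv, ← mul_one (ε * ε)]
    exact (isSLConj_antidiag_mul_self_mul d 1 ε).symm
end
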